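/- arXiv:2106.01947 — 5 statements merged into one kernel-verified Lean document; each statement's English description precedes it below -/
import Mathlib

section
/- Let G be a directed graph on a finite set A of alternatives (with at most one edge between any pair, and possibly some pairs having no edge, representing ties). Then every tournament (complete asymmetric orientation) extending G has a Condorcet winner (a vertex with an outgoing edge to every other vertex) if and only if G itself has a Condorcet winner or G has a pair of 'almost Condorcet winners', i.e., two vertices a,b with no edge between them such that both a and b have edges to every other vertex. -/
section Aux

variable {A : Type*}

/-- a tie: no edge either way -/
def tie0 (G : A → A → Prop) (x y : A) : Prop := x ≠ y ∧ ¬ G x y ∧ ¬ G y x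

/-- a source: no incoming edge -/
def src0 (G : A → A → Prop) (a : A) : Prop := ∀ c, ¬ G c a

/-- the tournament extension determined by `w` (incoming-edge choice) and default order `r` -/
def ext0 (G : A → A → Prop) (w : A → A) (r : A → A → Prop) (x y : A) : Prop :=
  G x y ∨ (tie0 G x y ∧ ((src0 G y ∧ x = w y) ∨ (¬ (src0 G x ∧ y = w x) ∧ r x y)))

end Aux

/-- Every tournament extending a digraph `G` (at most one edge per pair) has a
Condorcet winner iff `G` has a Condorcet winner or a pair of almost Condorcet winners. -/
theorem stmt0 {A : Type*} [Fintype A] [DecidableEq A]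
    (hA : 2 ≤ Fintype.card A)
    (G : A → A → Prop)
    (hGasym : ∀ a b, G a b → ¬ G b a)
    (hGirr : ∀ a, ¬ G a a) :
    (∀ T : A → A → Prop,
        (∀ a b, G a b → T a b) →
        (∀ a b, a ≠ b → (T a b ↔ ¬ T b a)) →
        (∀ a, ¬ T a a) →
        ∃ a, ∀ b, b ≠ a → T a b)
    ↔ ((∃ a, ∀ b, b ≠ a → G a b) ∨
        (∃ a b, a ≠ b ∧ ¬ G a b ∧ ¬ G b a ∧
          ∀ c, c ≠ a → c ≠ b → G a c ∧ G b c)) := by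
  classical
  constructor
  · intro hT
    by_contra hR
    push_neg at hR
    obtain ⟨hNC, hNA⟩ := hR
    have tiesymm : ∀ x y, tie0 G x y → tie0 G y x := fun x y h => ⟨h.1.symm, h.2.2, h.2.1⟩
    have hS_tie : ∀ s, src0 G s → ∀ c, c ≠ s → G s c ∨ tie0 G s c := by
      intro s hs c hcs
      by_cases h : G s c
      · exact Or.inl h
      · exact Or.inr ⟨hcs.symm, h, hs c⟩
    have hSS_tie : ∀ s t, src0 G s → src0 G t → s ≠ t → tie0 G s t := by
      intro s t hs ht hst
      exact ⟨hst, ht s, hs t⟩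
    have hS_partner : ∀ s, src0 G s → ∃ c, tie0 G s c := by
      intro s hs
      obtain ⟨b, hbs, hGb⟩ := hNC s
      exact ⟨b, hbs.symm, hGb, hs b⟩
    -- construct the incoming-edge choice function `w`
    have hW : ∃ w : A → A, (∀ s, src0 G s → tie0 G s (w s)) ∧
        (∀ s t, src0 G s → src0 G t → w s = t → w t ≠ s) := by
      by_cases hS : ∃ m, src0 G m
      · obtain ⟨m, hm⟩ := hS
        by_cases hc : ∃ c, tie0 G m c ∧ ¬ src0 G c
        · obtain ⟨c, hcm, hcS⟩ := hc
          refine ⟨fun s => if s = m then c else m, ?_, ?_⟩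
          · intro s hs
            beta_reduce
            by_cases h : s = m
            · subst h; rw [if_pos rfl]; exact hcm
            · rw [if_neg h]; exact hSS_tie s m hs hm h
          · intro s t hs ht hwst hwts
            beta_reduce at hwst hwts
            by_cases h : s = m
            · subst h
              rw [if_pos rfl] at hwst
              rw [← hwst] at hwts
              exact hcS (hwst ▸ ht)
            · rw [if_neg h] at hwst
              rw [← hwst] at hwts
              rw [if_pos rfl] at hwts
              exact hcS (hwts ▸ hs)
        · push_neg at hc
          obtain ⟨s0, hs0t⟩ := hS_partner m hm
          have hs0S : src0 G s0 := hc s0 hs0t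
          have hms0 : m ≠ s0 := hs0t.1
          by_cases hu : ∃ u, src0 G u ∧ u ≠ m ∧ u ≠ s0
          · obtain ⟨u, huS, hum, hus0⟩ := hu
            refine ⟨fun s => if s = m then s0 else if s = s0 then u else m, ?_, ?_⟩
            · intro s hs
              beta_reduce
              by_cases h1 : s = m
              · subst h1; rw [if_pos rfl]; exact hs0t
              · by_cases h2 : s = s0
                · subst h2
                  rw [if_neg h1, if_pos rfl]
                  exact hSS_tie s u hs huS (Ne.symm hus0)
                · rw [if_neg h1, if_neg h2]
                  exact hSS_tie s m hs hm h1
            · intro s t hs ht hwst hwts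
              beta_reduce at hwst hwts
              by_cases h1 : s = m
              · subst h1
                rw [if_pos rfl] at hwst
                rw [← hwst] at hwts
                rw [if_neg (Ne.symm hms0), if_pos rfl] at hwts
                exact hum hwts
              · by_cases h2 : s = s0
                · subst h2
                  rw [if_neg h1, if_pos rfl] at hwst
                  rw [← hwst] at hwts
                  rw [if_neg hum, if_neg hus0] at hwts
                  exact hms0 hwts
                · rw [if_neg h1, if_neg h2] at hwst
                  rw [← hwst] at hwts
                  rw [if_pos rfl] at hwts
                  exact h2 hwts.symm
          · push_neg at hu
            by_cases hd : ∃ c, tie0 G s0 c ∧ c ≠ m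
            · obtain ⟨c, hc2, hcm⟩ := hd
              have hcs0 : c ≠ s0 := Ne.symm hc2.1
              have hcS : ¬ src0 G c := fun h => hcs0 (hu c h hcm)
              refine ⟨fun s => if s = s0 then c else s0, ?_, ?_⟩
              · intro s hs
                beta_reduce
                by_cases h1 : s = s0
                · subst h1; rw [if_pos rfl]; exact hc2
                · rw [if_neg h1]
                  exact hSS_tie s s0 hs hs0S h1
              · intro s t hs ht hwst hwts
                beta_reduce at hwst hwts
                by_cases h1 : s = s0
                · subst h1
                  rw [if_pos rfl] at hwst
                  rw [← hwst] at hwts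
                  exact hcS (hwst ▸ ht)
                · rw [if_neg h1] at hwst
                  rw [← hwst] at hwts
                  rw [if_pos rfl] at hwts
                  exact hcS (hwts ▸ hs)
            · push_neg at hd
              -- m and s0 form an almost Condorcet pair: contradiction
              exfalso
              obtain ⟨c, hcm, hcs0, hcG⟩ :=
                hNA m s0 hms0 hs0t.2.1 hs0t.2.2
              have hGm : G m c := by
                rcases hS_tie m hm c hcm with h | h
                · exact h
                · exact absurd (hu c (hc c h) hcm) hcs0
              have hGs0 : G s0 c := by
                rcases hS_tie s0 hs0S c hcs0 with h | h
                · exact h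
                · exact absurd (hd c h) hcm
              exact hcG hGm hGs0
      · refine ⟨id, ?_, ?_⟩
        · intro s hs; exact absurd (⟨s, hs⟩ : ∃ m, src0 G m) hS
        · intro s t hs _ _; exact absurd (⟨s, hs⟩ : ∃ m, src0 G m) hS
    obtain ⟨w, hw1, hw2⟩ := hW
    -- default order on ties
    let e := Fintype.equivFin A
    let r : A → A → Prop := fun x y => e x < e y
    have hr : ∀ x y : A, x ≠ y → (r x y ↔ ¬ r y x) := by
      intro x y hxy
      have hne : e x ≠ e y := fun h => hxy (e.injective h)
      constructor
      · intro h h'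
        exact absurd (h.trans h') (lt_irrefl _)
      · intro h
        exact lt_of_le_of_ne (not_lt.mp h) hne
    -- no mutual choices
    have hQ : ∀ x y : A, ¬ ((src0 G y ∧ x = w y) ∧ (src0 G x ∧ y = w x)) := by
      rintro x y ⟨⟨hSy, hxw⟩, ⟨hSx, hyw⟩⟩
      exact hw2 x y hSx hSy hyw.symm hxw.symm
    set T : A → A → Prop := ext0 G w r with hTdef
    have hText : ∀ a b, G a b → T a b := fun a b h => Or.inl h
    have hTtot : ∀ a b, a ≠ b → (T a b ↔ ¬ T b a) := by
      intro a b hab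
      constructor
      · intro h1 h2
        rcases h1 with h | ⟨ht, hd⟩
        · rcases h2 with h' | ⟨ht', _⟩
          · exact hGasym a b h h'
          · exact ht'.2.2 h
        · rcases h2 with h' | ⟨ht', hd'⟩
          · exact ht.2.2 h'
          · rcases hd with hq | ⟨hnq, hr1⟩
            · rcases hd' with hq' | ⟨hnq', _⟩
              · exact hQ a b ⟨hq, hq'⟩
              · exact hnq' hq
            · rcases hd' with hq' | ⟨hnq', hr'⟩
              · exact hnq hq'
              · exact (hr a b hab).mp hr1 hr'
      · intro h2
        by_cases hG1 : G a b
        · exact Or.inl hG1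
        have hnGba : ¬ G b a := fun h => h2 (Or.inl h)
        have htab : tie0 G a b := ⟨hab, hG1, hnGba⟩
        have h3 : ¬ ((src0 G a ∧ b = w a) ∨ (¬ (src0 G b ∧ a = w b) ∧ r b a)) :=
          fun h => h2 (Or.inr ⟨tiesymm a b htab, h⟩)
        have h3a : ¬ (src0 G a ∧ b = w a) := fun h => h3 (Or.inl h)
        by_cases hq : src0 G b ∧ a = w b
        · exact Or.inr ⟨htab, Or.inl hq⟩
        · have h3b : ¬ r b a := fun hr' => h3 (Or.inr ⟨hq, hr'⟩)
          exact Or.inr ⟨htab, Or.inr ⟨h3a, (hr a b hab).mpr h3b⟩⟩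
    have hTirr : ∀ a, ¬ T a a := by
      rintro a (h | ⟨ht, -⟩)
      · exact hGirr a h
      · exact ht.1 rfl
    obtain ⟨a, ha⟩ := hT T hText hTtot hTirr
    by_cases hSa : src0 G a
    · have htw := hw1 a hSa
      have hne : w a ≠ a := fun h => htw.1 h.symm
      have h1 : T a (w a) := ha (w a) hne
      have h2 : T (w a) a := Or.inr ⟨tiesymm a (w a) htw, Or.inl ⟨hSa, rfl⟩⟩
      exact (hTtot a (w a) (Ne.symm hne)).mp h1 h2
    · have : ∃ c, G c a := by
        by_contra h
        push_neg at h
        exact hSa h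
      obtain ⟨c, hc⟩ := this
      have hca : c ≠ a := fun h => hGirr a (h ▸ hc)
      exact (hTtot a c (Ne.symm hca)).mp (ha c hca) (Or.inl hc)
  · rintro (⟨a, ha⟩ | ⟨a, b, hab, hGab, hGba, h⟩) <;> intro T hT1 hT2 hT3
    · exact ⟨a, fun b hb => hT1 _ _ (ha b hb)⟩
    · by_cases hTab : T a b
      · refine ⟨a, fun c hc => ?_⟩
        by_cases hcb : c = b
        · subst hcb; exact hTab
        · exact hT1 _ _ (h c hc hcb).1
      · have hTba : T b a := by
          by_contra h'
          exact hTab ((hT2 a b hab).mpr h')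
        refine ⟨b, fun c hc => ?_⟩
        by_cases hca : c = a
        · subst hca; exact hTba
        · exact hT1 _ _ (h c hca hc).2
end

section
/- Let C and C* be finite unions of polyhedra in R^q such that C ∩ C* = ∅ and every integer point of Z^q lies in C ∪ C*. Let C_{≤0} (resp. C*_{≤0}) denote the union of the characteristic cones of the polyhedra comprising C (resp. C*), i.e., for a polyhedron {x : A x ≤ b} the cone is {x : A x ≤ 0}. Then C_{≤0} ∪ C*_{≤0} = R^q. -/
open Finset

private lemma mul_floor_ge (M y : ℝ) : M * y - |M| ≤ M * (⌊y⌋ : ℝ) := by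
  have h1 : (⌊y⌋ : ℝ) ≤ y := Int.floor_le y
  have h2 : y - 1 < (⌊y⌋ : ℝ) := Int.sub_one_lt_floor y
  rcases le_or_gt 0 M with h | h
  · rw [abs_of_nonneg h]; nlinarith
  · rw [abs_of_neg h]; nlinarith

private lemma cone_of_infinite {q N : ℕ} (M : Fin N → Fin q → ℝ) (b : Fin N → ℝ)
    (x : Fin q → ℝ) (S : Set ℕ) (hS : S.Infinite)
    (h : ∀ n ∈ S, ∀ l, ∑ j, M l j * (⌊(n : ℝ) * x j⌋ : ℝ) ≤ b l) :
    ∀ l, ∑ j, M l j * x j ≤ 0 := by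
  intro l
  by_contra hc
  push_neg at hc
  set c := ∑ j, M l j * x j with hcdef
  set K := ∑ j, |M l j| with hKdef
  obtain ⟨N0, hN0⟩ := exists_nat_gt ((b l + K) / c)
  obtain ⟨n, hnS, hn⟩ := hS.exists_gt N0
  have hbc : b l + K < (n : ℝ) * c := by
    have h1 : (b l + K) / c < (n : ℝ) := lt_trans hN0 (by exact_mod_cast hn)
    have := (div_lt_iff₀ hc).mp h1
    linarith
  have hsum : (n : ℝ) * c - K ≤ ∑ j, M l j * (⌊(n : ℝ) * x j⌋ : ℝ) := by
    have hterm : ∀ j ∈ Finset.univ, M l j * ((n : ℝ) * x j) - |M l j| ≤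
        M l j * (⌊(n : ℝ) * x j⌋ : ℝ) := fun j _ => mul_floor_ge _ _
    calc (n : ℝ) * c - K = ∑ j, (M l j * ((n : ℝ) * x j) - |M l j|) := by
          rw [Finset.sum_sub_distrib, hcdef, Finset.mul_sum]
          congr 1
          exact Finset.sum_congr rfl fun j _ => by ring
      _ ≤ _ := Finset.sum_le_sum hterm
  have := h n hnS l
  linarith

/-- If `C` and `C*` are finite unions of polyhedra in `ℝ^q` with `C ∩ C* = ∅`
and every integer point lying in `C ∪ C*`, then the unions of their characteristic cones
cover all of `ℝ^q`. -/
theorem stmt1 {q I I' : ℕ}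
    (L : Fin I → ℕ) (M : ∀ i : Fin I, Fin (L i) → Fin q → ℝ)
    (b : ∀ i : Fin I, Fin (L i) → ℝ)
    (L' : Fin I' → ℕ) (M' : ∀ i : Fin I', Fin (L' i) → Fin q → ℝ)
    (b' : ∀ i : Fin I', Fin (L' i) → ℝ)
    (hdisj :
      (⋃ i, {x : Fin q → ℝ | ∀ l, ∑ j, M i l j * x j ≤ b i l}) ∩
      (⋃ i, {x : Fin q → ℝ | ∀ l, ∑ j, M' i l j * x j ≤ b' i l}) = ∅)
    (hint : ∀ z : Fin q → ℤ,
      (fun j => (z j : ℝ)) ∈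
        (⋃ i, {x : Fin q → ℝ | ∀ l, ∑ j, M i l j * x j ≤ b i l}) ∪
        (⋃ i, {x : Fin q → ℝ | ∀ l, ∑ j, M' i l j * x j ≤ b' i l})) :
    (⋃ i, {x : Fin q → ℝ | ∀ l, ∑ j, M i l j * x j ≤ 0}) ∪
    (⋃ i, {x : Fin q → ℝ | ∀ l, ∑ j, M' i l j * x j ≤ 0}) = Set.univ := by
  ext x
  simp only [Set.mem_univ, iff_true, Set.mem_union, Set.mem_iUnion, Set.mem_setOf_eq]
  have key : ∀ n : ℕ, ∃ s : Fin I ⊕ Fin I',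
      Sum.elim (fun i => ∀ l, ∑ j, M i l j * (⌊(n : ℝ) * x j⌋ : ℝ) ≤ b i l)
        (fun i => ∀ l, ∑ j, M' i l j * (⌊(n : ℝ) * x j⌋ : ℝ) ≤ b' i l) s := by
    intro n
    have := hint (fun j => ⌊(n : ℝ) * x j⌋)
    simp only [Set.mem_union, Set.mem_iUnion, Set.mem_setOf_eq] at this
    rcases this with ⟨i, hi⟩ | ⟨i, hi⟩
    exacts [⟨.inl i, hi⟩, ⟨.inr i, hi⟩]
  choose g hg using key
  obtain ⟨s, hs⟩ := Finite.exists_infinite_fiber g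
  have hSinf : (g ⁻¹' {s}).Infinite := Set.infinite_coe_iff.mp hs
  cases s with
  | inl i =>
    left
    refine ⟨i, cone_of_infinite (M i) (b i) x _ hSinf ?_⟩
    intro n hn l
    have h1 := hg n
    rw [show g n = Sum.inl i from hn] at h1
    exact h1 l
  | inr i =>
    right
    refine ⟨i, cone_of_infinite (M' i) (b' i) x _ hSinf ?_⟩
    intro n hn l
    have h1 := hg n
    rw [show g n = Sum.inr i from hn] at h1
    exact h1 l
end

section
/- Given a finite family of hyperplanes H = (h_1,...,h_K) in R^d and two feasible sign vectors t_1, t_2 ∈ {+,-,0}^K (each realized by some point of R^d), t_1 refines t_2 (i.e., t_1 agrees with t_2 on every coordinate where t_2 is nonzero) if and only if the characteristic cone of the polyhedron associated to t_1 contains the characteristic cone of the polyhedron associated to t_2, where the characteristic cone of a sign vector t is {x ∈ R^d : for all k, (t_k = + → h_k·x ≥ 0), (t_k = - → h_k·x ≤ 0), (t_k = 0 → h_k·x = 0)}. -/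
open Finset

/-- For feasible sign vectors `t₁, t₂` of a family of hyperplanes, `t₁` refines
`t₂` iff the characteristic cone of `t₁` contains the characteristic cone of `t₂`. -/
theorem stmt3 {d K : ℕ} (h : Fin K → Fin d → ℝ) (t₁ t₂ : Fin K → SignType)
    (ht₁ : ∃ x : Fin d → ℝ, ∀ k, SignType.sign (∑ j, h k j * x j) = t₁ k)
    (ht₂ : ∃ x : Fin d → ℝ, ∀ k, SignType.sign (∑ j, h k j * x j) = t₂ k) :
    (∀ k, t₂ k ≠ 0 → t₁ k = t₂ k) ↔
    {x : Fin d → ℝ | ∀ k,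
        (t₂ k = 1 → 0 ≤ ∑ j, h k j * x j) ∧
        (t₂ k = -1 → ∑ j, h k j * x j ≤ 0) ∧
        (t₂ k = 0 → ∑ j, h k j * x j = 0)} ⊆
    {x : Fin d → ℝ | ∀ k,
        (t₁ k = 1 → 0 ≤ ∑ j, h k j * x j) ∧
        (t₁ k = -1 → ∑ j, h k j * x j ≤ 0) ∧
        (t₁ k = 0 → ∑ j, h k j * x j = 0)} := by
  obtain ⟨x₂, hx₂⟩ := ht₂
  constructor
  · intro href x hx k
    by_cases hne : t₂ k = 0
    · have hz : (∑ j, h k j * x j) = 0 := (hx k).2.2 hne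
      exact ⟨fun _ => hz.ge, fun _ => hz.le, fun _ => hz⟩
    · rw [href k hne]; exact hx k
  · intro hsub k hne
    have hmem : x₂ ∈ {x : Fin d → ℝ | ∀ k,
        (t₂ k = 1 → 0 ≤ ∑ j, h k j * x j) ∧
        (t₂ k = -1 → ∑ j, h k j * x j ≤ 0) ∧
        (t₂ k = 0 → ∑ j, h k j * x j = 0)} := by
      intro k'
      have hs := hx₂ k'
      refine ⟨fun hk => ?_, fun hk => ?_, fun hk => ?_⟩ <;> rw [hk] at hs
      · exact (sign_eq_one_iff.mp hs).le
      · exact (sign_eq_neg_one_iff.mp hs).le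
      · exact sign_eq_zero_iff.mp hs
    have h1 := hsub hmem k
    have hs := hx₂ k
    rcases h2 : t₂ k with _ | _ | _
    · exact absurd h2 hne
    · -- t₂ k = -1
      rw [h2] at hs
      have hneg : (∑ j, h k j * x₂ j) < 0 := sign_eq_neg_one_iff.mp hs
      rcases h3 : t₁ k with _ | _ | _
      · exact absurd ((h1.2.2 h3)) hneg.ne
      · rfl
      · exact absurd (h1.1 h3) (not_le.mpr hneg)
    · -- t₂ k = 1
      rw [h2] at hs
      have hpos : (0:ℝ) < ∑ j, h k j * x₂ j := sign_eq_one_iff.mp hs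
      rcases h3 : t₁ k with _ | _ | _
      · exact absurd ((h1.2.2 h3)) hpos.ne'
      · exact absurd (h1.2.1 h3) (not_le.mpr hpos)
      · rfl
end

section
/- For any fixed m ≥ 3 and any scoring vector s = (s_1,...,s_m) of reals with s_1 ≥ s_2 ≥ ... ≥ s_m and s_1 > s_m, for any n ≥ 8m + 49 and any pair of distinct alternatives a ≠ b in A = {1,...,m}, there exists a profile P of n linear orders over A such that a is the Condorcet winner of P and b is the unique winner under the positional scoring rule with vector s. -/
/-!
Relabel the alternatives so that `b = 0` and `a = 1`, the others being `2, …, m - 1`. With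
`n = 2m + 14 + 2k + r`, `r ≤ 1`, take `m + 2 + k + r` votes `b ≻ ⋯ ≻ a`, four votes `b ≻ a ≻ ⋯`,
`6 + k` votes `a ≻ b ≻ ⋯`, four votes `2 ≻ a ≻ b ≻ ⋯`, and for every `c ≥ 2` one vote
`a ≻ b ≻ ⋯ ≻ c`. Then `a` is ranked above any rival in `m + 8 + k > n / 2` votes.

By Abel summation, `b` wins every scoring rule with a nonincreasing, nonconstant vector as soon as,
for each `t < m - 1`, `b` is in the top `t + 1` positions of strictly more votes than any other
alternative. For `t = 0` this is `m + 6 + k + r` votes against `m + 4 + k` for `a` and at most `4`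
for the others. For `t ≥ 1`, `b` misses the top two only in four votes, while `a` is last in
`m + 2 + k + r` votes; each `c ≥ 2` is in the top two of at most `m + 6 + k + r` votes, and is last
in some vote, which `b` never is.
-/

open Finset

theorem card_filter_sumElim_const {α β γ : Type*} [Fintype α] [Fintype β] (v : γ) (Q : β → γ)
    (p : γ → Prop) [DecidablePred p] :
    #{x : α ⊕ β | p (Sum.elim (fun _ => v) Q x)} =
      (if p v then Fintype.card α else 0) + #{y | p (Q y)} := by
  rw [card_filter, card_filter, Fintype.sum_sum_type]
  by_cases hv : p v <;>
    simp only [hv, Sum.elim_inl, Sum.elim_inr, if_true, if_false, sum_const_zero, sum_const,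
      card_univ, smul_eq_mul, mul_one, zero_add] <;> rfl

theorem val_swap_apply {n : ℕ} (i j x : Fin n) :
    (Equiv.swap i j x).val =
      if x.val = i.val then j.val else if x.val = j.val then i.val else x.val := by
  simp only [Equiv.swap_apply_def, Fin.ext_iff]
  split_ifs <;> rfl

theorem exists_equiv_apply_eq_apply_eq {α : Type*} [DecidableEq α] {a b a' b' : α}
    (hab : a ≠ b) (hab' : a' ≠ b') : ∃ σ : α ≃ α, σ a = a' ∧ σ b = b' := by
  set x := Equiv.swap a a' b
  have hx : a' ≠ x := by
    rw [← Equiv.swap_apply_left a a']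
    exact (Equiv.swap a a').injective.ne hab
  exact ⟨(Equiv.swap a a').trans (Equiv.swap x b'), by
    simp [Equiv.swap_apply_of_ne_of_ne hx hab'], by simp [x]⟩

section Profiles

variable {ι κ : Type*} [Fintype ι] [Fintype κ] {m : ℕ}

-- `P i c` is the rank of the alternative `c` in vote `i`, rank `0` being the top.

def IsCondorcetWinner (P : ι → Fin m ≃ Fin m) (a : Fin m) : Prop :=
  ∀ c, c ≠ a → #{i | P i c < P i a} < #{i | P i a < P i c}

def IsUniqueScoringWinner (s : Fin m → ℝ) (P : ι → Fin m ≃ Fin m) (b : Fin m) : Prop :=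
  ∀ c, c ≠ b → ∑ i, s (P i c) < ∑ i, s (P i b)

theorem isCondorcetWinner_of_card_lt_two_mul {P : ι → Fin m ≃ Fin m} {a : Fin m}
    (h : ∀ c, c ≠ a → Fintype.card ι < 2 * #{i | P i a < P i c}) : IsCondorcetWinner P a := by
  intro c hc
  have hsplit := card_filter_add_card_filter_not (s := univ) fun i => P i a < P i c
  have hneg : ∀ i, ¬ P i a < P i c ↔ P i c < P i a := fun i =>
    not_lt.trans ((P i).injective.ne hc).le_iff_lt
  simp only [hneg, card_univ] at hsplit
  have := h c hc
  omega

theorem IsCondorcetWinner.relabel {P : ι → Fin m ≃ Fin m} (σ : Fin m ≃ Fin m) {a : Fin m}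
    (h : IsCondorcetWinner P (σ a)) : IsCondorcetWinner (fun i => σ.trans (P i)) a :=
  fun c hc => h (σ c) (σ.injective.ne hc)

theorem IsUniqueScoringWinner.relabel {s : Fin m → ℝ} {P : ι → Fin m ≃ Fin m}
    (σ : Fin m ≃ Fin m) {b : Fin m} (h : IsUniqueScoringWinner s P (σ b)) :
    IsUniqueScoringWinner s (fun i => σ.trans (P i)) b :=
  fun c hc => h (σ c) (σ.injective.ne hc)

theorem card_filter_comp_equiv (e : κ ≃ ι) (p : ι → Prop) [DecidablePred p] :
    #{j | p (e j)} = #{i | p i} := by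
  simp only [card_filter]
  exact e.sum_comp fun i => if p i then 1 else 0

theorem IsCondorcetWinner.comp_equiv {P : ι → Fin m ≃ Fin m} {a : Fin m} (e : κ ≃ ι)
    (h : IsCondorcetWinner P a) : IsCondorcetWinner (P ∘ e) a := by
  intro c hc
  simpa only [Function.comp_apply, card_filter_comp_equiv e (fun i => P i c < P i a),
    card_filter_comp_equiv e (fun i => P i a < P i c)] using h c hc

theorem IsUniqueScoringWinner.comp_equiv {s : Fin m → ℝ} {P : ι → Fin m ≃ Fin m} {b : Fin m}
    (e : κ ≃ ι) (h : IsUniqueScoringWinner s P b) : IsUniqueScoringWinner s (P ∘ e) b := by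
  intro c hc
  simpa only [Function.comp_apply, e.sum_comp fun i => s (P i c), e.sum_comp fun i => s (P i b)]
    using h c hc

end Profiles

section ScoringDominance

variable {ι : Type*} [Fintype ι] {m : ℕ}

theorem eq_add_sum_range_ite_sub (s : Fin (m + 1) → ℝ) (r : Fin (m + 1)) :
    s r = s (Fin.last m) + ∑ t ∈ range m,
      if r.val ≤ t then s (Fin.clamp t m) - s (Fin.clamp (t + 1) m) else 0 := by
  set d : ℕ → ℝ := fun t => s (Fin.clamp t m)
  have hIco : ∑ t ∈ range m, (if r.val ≤ t then d t - d (t + 1) else 0)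
      = ∑ t ∈ Ico r.val m, (d t - d (t + 1)) := by
    rw [← sum_filter]
    congr 1
    ext t
    simp only [mem_filter, mem_range, mem_Ico]
    omega
  have hr : d r.val = s r := congrArg s (Fin.ext (by simp [Fin.clamp]; omega))
  have hm : d m = s (Fin.last m) := congrArg s (Fin.clamp_eq_last m m le_rfl)
  rw [hIco, sum_Ico_eq_sub _ (by omega), sum_range_sub', sum_range_sub', hr, hm]
  ring

theorem sum_eq_card_mul_add_sum_card_filter (s : Fin (m + 1) → ℝ) (f : ι → Fin (m + 1)) :
    ∑ i, s (f i) = Fintype.card ι * s (Fin.last m) + ∑ t ∈ range m,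
      (s (Fin.clamp t m) - s (Fin.clamp (t + 1) m)) * #{i | (f i).val ≤ t} := by
  simp only [eq_add_sum_range_ite_sub s (f _), sum_add_distrib, sum_const, card_univ,
    nsmul_eq_mul, ← sum_boole, mul_sum, mul_ite, mul_one, mul_zero]
  rw [sum_comm]

theorem sum_lt_sum_of_card_val_le_lt {s : Fin (m + 1) → ℝ} (hs : Antitone s) (hlast : s (Fin.last m) < s 0)
    {f g : ι → Fin (m + 1)}
    (h : ∀ t < m, #{i | (g i).val ≤ t} < #{i | (f i).val ≤ t}) :
    ∑ i, s (g i) < ∑ i, s (f i) := by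
  set d : ℕ → ℝ := fun t => s (Fin.clamp t m)
  have hstep : ∀ t ∈ range m, (d t - d (t + 1)) * #{i | (g i).val ≤ t} + (d t - d (t + 1))
      ≤ (d t - d (t + 1)) * #{i | (f i).val ≤ t} := by
    intro t ht
    have hd : 0 ≤ d t - d (t + 1) :=
      sub_nonneg.mpr (hs (Fin.clamp_monotone t.le_succ))
    have hcard : (#{i | (g i).val ≤ t} : ℝ) + 1 ≤ #{i | (f i).val ≤ t} := by
      exact_mod_cast h t (mem_range.mp ht)
    nlinarith
  have htel : ∑ t ∈ range m, (d t - d (t + 1)) = s 0 - s (Fin.last m) := by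
    rw [sum_range_sub']
    exact congrArg₂ _ (congrArg s (Fin.ext (Nat.zero_min m)))
      (congrArg s (Fin.clamp_eq_last m m le_rfl))
  have := sum_le_sum hstep
  rw [sum_add_distrib, htel] at this
  rw [sum_eq_card_mul_add_sum_card_filter s f, sum_eq_card_mul_add_sum_card_filter s g]
  linarith

end ScoringDominance

namespace CondorcetScoring

/- Alternatives are `Fin (m + 3)`, with `0` standing for `b` and `1` for `a`; as a rank function,
`Equiv.refl` is the vote `b ≻ a ≻ 2 ≻ ⋯`. -/

variable (m : ℕ)

def bTopALast : Fin (m + 3) ≃ Fin (m + 3) := Equiv.swap 1 (Fin.last _)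

def aTop : Fin (m + 3) ≃ Fin (m + 3) := Equiv.swap 0 1

def otherTop : Fin (m + 3) ≃ Fin (m + 3) := Equiv.swap 0 2

def aTopLast (j : Fin (m + 3)) : Fin (m + 3) ≃ Fin (m + 3) :=
  (Equiv.swap j (Fin.last _)).trans (Equiv.swap 0 1)

abbrev Others : Type := {j : Fin (m + 3) // 2 ≤ j.val}

abbrev Voters (k r : ℕ) : Type := Fin (m + 5 + k + r) ⊕ Fin 4 ⊕ Fin (6 + k) ⊕ Fin 4 ⊕ Others m

def profile (k r : ℕ) : Voters m k r → Fin (m + 3) ≃ Fin (m + 3) :=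
  Sum.elim (fun _ => bTopALast m) <| Sum.elim (fun _ => Equiv.refl _) <|
    Sum.elim (fun _ => aTop m) <| Sum.elim (fun _ => otherTop m) fun j => aTopLast m j

theorem card_others : Fintype.card (Others m) = m + 1 := by
  have hsplit := card_filter_add_card_filter_not (s := (univ : Finset (Fin (m + 3))))
    fun j => j.val < 2
  simp only [Fin.card_filter_val_lt, not_lt, card_univ, Fintype.card_fin] at hsplit
  rw [Fintype.card_subtype]
  omega

theorem card_voters (k r : ℕ) : Fintype.card (Voters m k r) = 2 * m + 20 + 2 * k + r := by
  simp only [Fintype.card_sum, Fintype.card_fin, card_others]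
  ring

theorem card_filter_profile (k r : ℕ) (p : (Fin (m + 3) ≃ Fin (m + 3)) → Prop)
    [DecidablePred p] :
    #{i | p (profile m k r i)} = (if p (bTopALast m) then m + 5 + k + r else 0) +
      (if p (Equiv.refl _) then 4 else 0) + (if p (aTop m) then 6 + k else 0) +
      (if p (otherTop m) then 4 else 0) + #{j : Others m | p (aTopLast m j)} := by
  rw [profile, card_filter_sumElim_const, card_filter_sumElim_const, card_filter_sumElim_const,
    card_filter_sumElim_const]
  simp only [Fintype.card_fin, add_assoc]

variable {m}

theorem bTopALast_zero : (bTopALast m 0).val = 0 := by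
  simp only [bTopALast, val_swap_apply, Fin.val_zero, Fin.val_one, Fin.val_last]
  grind

theorem bTopALast_one : (bTopALast m 1).val = m + 2 := by
  simp only [bTopALast, val_swap_apply, Fin.val_one, Fin.val_last]
  grind

theorem bTopALast_of_two_le {c : Fin (m + 3)} (hc : 2 ≤ c.val) :
    1 ≤ (bTopALast m c).val ∧ (bTopALast m c).val ≤ m + 1 := by
  simp only [bTopALast, val_swap_apply, Fin.val_one, Fin.val_last]
  grind

theorem aTop_zero : (aTop m 0).val = 1 := by
  simp only [aTop, val_swap_apply, Fin.val_zero, Fin.val_one]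
  grind

theorem aTop_one : (aTop m 1).val = 0 := by
  simp only [aTop, val_swap_apply, Fin.val_zero, Fin.val_one]
  grind

theorem aTop_of_two_le {c : Fin (m + 3)} (hc : 2 ≤ c.val) : (aTop m c).val = c.val := by
  simp only [aTop, val_swap_apply, Fin.val_zero, Fin.val_one]
  grind

theorem otherTop_zero : (otherTop m 0).val = 2 := by
  simp only [otherTop, val_swap_apply, Fin.val_zero, Fin.val_two]
  grind

theorem otherTop_one : (otherTop m 1).val = 1 := by
  simp only [otherTop, val_swap_apply, Fin.val_zero, Fin.val_one, Fin.val_two]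
  grind

variable {j : Fin (m + 3)}

theorem aTopLast_zero (hj : 2 ≤ j.val) : (aTopLast m j 0).val = 1 := by
  simp only [aTopLast, Equiv.trans_apply, val_swap_apply, Fin.val_zero,
    Fin.val_one, Fin.val_last]
  grind

theorem aTopLast_one (hj : 2 ≤ j.val) : (aTopLast m j 1).val = 0 := by
  simp only [aTopLast, Equiv.trans_apply, val_swap_apply, Fin.val_zero,
    Fin.val_one, Fin.val_last]
  grind

theorem aTopLast_of_two_le (hj : 2 ≤ j.val) {c : Fin (m + 3)} (hc : 2 ≤ c.val) :
    2 ≤ (aTopLast m j c).val := by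
  simp only [aTopLast, Equiv.trans_apply, val_swap_apply, Fin.val_zero,
    Fin.val_one, Fin.val_last]
  grind

theorem aTopLast_self : (aTopLast m j j).val = m + 2 := by
  simp only [aTopLast, Equiv.trans_apply, val_swap_apply, Fin.val_zero,
    Fin.val_one, Fin.val_last]
  grind

variable {k r : ℕ}

theorem eq_zero_or_two_le_of_ne_one {c : Fin (m + 3)} (hc : c ≠ 1) : c = 0 ∨ 2 ≤ c.val := by
  rw [Ne, Fin.ext_iff, Fin.val_one] at hc
  rw [Fin.ext_iff, Fin.val_zero]
  omega

theorem isCondorcetWinner_profile (hr : r ≤ 1) : IsCondorcetWinner (profile m k r) 1 := by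
  refine isCondorcetWinner_of_card_lt_two_mul fun c hc => ?_
  rw [card_voters, card_filter_profile m k r fun v => v 1 < v c]
  simp only [Fin.lt_def, Equiv.refl_apply, Fin.val_one, bTopALast_one, aTop_one,
    otherTop_one]
  obtain rfl | hc := eq_zero_or_two_le_of_ne_one hc
  · have hL : #{j : Others m | (aTopLast m j 1).val < (aTopLast m j 0).val} = m + 1 := by
      rw [filter_true_of_mem fun j _ => ?_, card_univ, card_others]
      rw [aTopLast_one j.2, aTopLast_zero j.2]
      omega
    simp only [hL, Fin.val_zero, bTopALast_zero, aTop_zero, otherTop_zero]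
    grind
  · have hL : #{j : Others m | (aTopLast m j 1).val < (aTopLast m j c).val} = m + 1 := by
      rw [filter_true_of_mem fun j _ => ?_, card_univ, card_others]
      rw [aTopLast_one j.2]
      have := aTopLast_of_two_le j.2 hc
      omega
    have := bTopALast_of_two_le hc
    simp only [hL, aTop_of_two_le hc]
    grind

theorem eq_one_or_two_le_of_ne_zero {c : Fin (m + 3)} (hc : c ≠ 0) : c = 1 ∨ 2 ≤ c.val := by
  rw [Ne, Fin.ext_iff, Fin.val_zero] at hc
  rw [Fin.ext_iff, Fin.val_one]
  omega

theorem card_filter_aTopLast_zero_le (t : ℕ) :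
    #{j : Others m | (aTopLast m j 0).val ≤ t} = if 1 ≤ t then m + 1 else 0 := by
  split_ifs with ht
  · rw [filter_true_of_mem fun j _ => by rw [aTopLast_zero j.2]; exact ht, card_univ, card_others]
  · rw [filter_false_of_mem fun j _ => by rw [aTopLast_zero j.2]; exact ht, card_empty]

theorem isUniqueScoringWinner_profile {s : Fin (m + 3) → ℝ} (hs : Antitone s)
    (hlast : s (Fin.last (m + 2)) < s 0) : IsUniqueScoringWinner s (profile m k r) 0 := by
  intro c hc
  refine sum_lt_sum_of_card_val_le_lt hs hlast fun t ht => ?_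
  rw [card_filter_profile m k r fun v => (v c).val ≤ t,
    card_filter_profile m k r fun v => (v 0).val ≤ t]
  simp only [Equiv.refl_apply, Fin.val_zero, bTopALast_zero, aTop_zero, otherTop_zero,
    card_filter_aTopLast_zero_le]
  obtain rfl | hc := eq_one_or_two_le_of_ne_zero hc
  · have hL : #{j : Others m | (aTopLast m j 1).val ≤ t} = m + 1 := by
      rw [filter_true_of_mem fun j _ => by rw [aTopLast_one j.2]; omega, card_univ, card_others]
    simp only [hL, Fin.val_one, bTopALast_one, aTop_one, otherTop_one]
    grind
  · have := bTopALast_of_two_le hc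
    rw [aTop_of_two_le hc]
    rcases lt_or_ge t 2 with ht2 | ht2
    · have hL : #{j : Others m | (aTopLast m j c).val ≤ t} = 0 := by
        rw [filter_false_of_mem fun j _ => by have := aTopLast_of_two_le j.2 hc; omega,
          card_empty]
      grind
    · have hL : #{j : Others m | (aTopLast m j c).val ≤ t} < m + 1 := by
        rw [← card_others m]
        refine card_lt_univ_of_notMem (x := ⟨c, hc⟩) ?_
        rw [mem_filter, aTopLast_self]
        omega
      grind

end CondorcetScoring

open CondorcetScoring

/-- For any `m ≥ 3`, any scoring vector `s` with `s 0 ≥ ... ≥ s (m-1)` and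
`s 0 > s (m-1)`, any `n ≥ 8m + 49`, and any distinct alternatives `a ≠ b`, there is a
profile of `n` linear orders (given as rank functions: `P i c` is the rank of `c` in vote `i`,
smaller is better) in which `a` is the Condorcet winner and `b` is the unique winner of the
positional scoring rule with vector `s`. -/
theorem stmt7 (m : ℕ) (hm : 3 ≤ m) (s : Fin m → ℝ)
    (hmono : ∀ i j : Fin m, i ≤ j → s j ≤ s i)
    (hstrict : s ⟨m - 1, by omega⟩ < s ⟨0, by omega⟩)
    (n : ℕ) (hn : 8 * m + 49 ≤ n) (a b : Fin m) (hab : a ≠ b) :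
    ∃ P : Fin n → (Fin m ≃ Fin m),
      (∀ c, c ≠ a →
        (Finset.univ.filter fun i => P i c < P i a).card <
        (Finset.univ.filter fun i => P i a < P i c).card) ∧
      (∀ c, c ≠ b → ∑ i, s (P i c) < ∑ i, s (P i b)) := by
  obtain ⟨m, rfl⟩ : ∃ m', m = m' + 3 := ⟨m - 3, by omega⟩
  obtain ⟨k, r, hr, hcard⟩ : ∃ k r, r ≤ 1 ∧ Fintype.card (Voters m k r) = n :=
    ⟨(n - (2 * m + 20)) / 2, (n - (2 * m + 20)) % 2, by omega, by rw [card_voters]; omega⟩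
  obtain ⟨σ, hσa, hσb⟩ := exists_equiv_apply_eq_apply_eq hab (zero_ne_one' (Fin (m + 3))).symm
  set e := (Fintype.equivFinOfCardEq hcard).symm
  have hC : IsCondorcetWinner (profile m k r ∘ e) (σ a) :=
    hσa ▸ (isCondorcetWinner_profile hr).comp_equiv e
  have hS : IsUniqueScoringWinner s (profile m k r ∘ e) (σ b) :=
    hσb ▸ (isUniqueScoringWinner_profile (fun _ _ h => hmono _ _ h) hstrict).comp_equiv e
  exact ⟨fun i => σ.trans (profile m k r (e i)), hC.relabel σ, hS.relabel σ⟩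
end

section
/- For an irresolute voting rule r̄ defined by hyperplanes H and an output function g on sign vectors (a GISR), r̄ is continuous if and only if for every feasible sign vector t and every feasible sign vector t' that refines t, g(t') ⊆ g(t). -/
open Finset Filter

/-- A GISR given by hyperplanes `H` (vectors in `ℝ^{m!}`, indexed by linear
orders over `m` alternatives) and an output map `g` on sign vectors (nonempty on feasible
signs) is continuous iff for all feasible sign vectors `t` and all feasible refinements `t'`
of `t`, `g t' ⊆ g t`. -/
theorem stmt12 (m K : ℕ) (H : Fin K → (Fin m ≃ Fin m) → ℝ)
    (g : (Fin K → SignType) → Set (Fin m))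
    (hg : ∀ t : Fin K → SignType,
      (∃ x : (Fin m ≃ Fin m) → ℝ,
        (fun k => SignType.sign (∑ R : Fin m ≃ Fin m, H k R * x R)) = t) →
      (g t).Nonempty) :
    ((∀ x : (Fin m ≃ Fin m) → ℝ, ∀ a : Fin m, ∀ xs : ℕ → (Fin m ≃ Fin m) → ℝ,
        Tendsto xs atTop (nhds x) →
        (∀ j, a ∈ g (fun k => SignType.sign (∑ R : Fin m ≃ Fin m, H k R * xs j R))) →
        a ∈ g (fun k => SignType.sign (∑ R : Fin m ≃ Fin m, H k R * x R)))
      ↔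
      (∀ t t' : Fin K → SignType,
        (∃ x : (Fin m ≃ Fin m) → ℝ,
          (fun k => SignType.sign (∑ R : Fin m ≃ Fin m, H k R * x R)) = t) →
        (∃ x : (Fin m ≃ Fin m) → ℝ,
          (fun k => SignType.sign (∑ R : Fin m ≃ Fin m, H k R * x R)) = t') →
        (∀ k, t k ≠ 0 → t' k = t k) →
        g t' ⊆ g t)) := by
  classical
  have Lcont : ∀ k : Fin K, Continuous (fun x : (Fin m ≃ Fin m) → ℝ =>
      ∑ R : Fin m ≃ Fin m, H k R * x R) := fun k =>
    continuous_finset_sum _ fun R _ => continuous_const.mul (continuous_apply R)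
  have signstab : ∀ c : ℝ, c ≠ 0 →
      ∀ᶠ y in nhds c, SignType.sign y = SignType.sign c := by
    intro c hc
    rcases hc.lt_or_gt with h | h
    · filter_upwards [eventually_lt_nhds h] with y hy
      rw [sign_neg hy, sign_neg h]
    · filter_upwards [eventually_gt_nhds h] with y hy
      rw [sign_pos hy, sign_pos h]
  constructor
  · rintro hcont t t' ⟨x, hx⟩ ⟨y, hy⟩ href a ha
    have hlin : ∀ (k : Fin K) (ε : ℝ),
        (∑ R : Fin m ≃ Fin m, H k R * (x R + ε * y R)) =
        (∑ R : Fin m ≃ Fin m, H k R * x R) + ε * ∑ R : Fin m ≃ Fin m, H k R * y R := by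
      intro k ε
      rw [Finset.mul_sum, ← Finset.sum_add_distrib]
      congr 1; ext R; ring
    have key : ∀ᶠ ε in nhdsWithin (0:ℝ) (Set.Ioi 0),
        ∀ k, SignType.sign (∑ R : Fin m ≃ Fin m, H k R * (x R + ε * y R)) = t' k := by
      rw [Filter.eventually_all]
      intro k
      by_cases h0 : (∑ R : Fin m ≃ Fin m, H k R * x R) = 0
      · filter_upwards [self_mem_nhdsWithin] with ε (hε : ε ∈ Set.Ioi 0)
        rw [hlin, h0, zero_add, sign_mul, sign_pos hε, one_mul]
        exact congrFun hy k
      · have htk : t k ≠ 0 := by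
          rw [← hx]; simpa [sign_eq_zero_iff] using h0
        have hε : Tendsto (fun ε : ℝ =>
            (∑ R : Fin m ≃ Fin m, H k R * x R) + ε * ∑ R : Fin m ≃ Fin m, H k R * y R)
            (nhdsWithin 0 (Set.Ioi 0)) (nhds (∑ R : Fin m ≃ Fin m, H k R * x R)) := by
          have h1 : Tendsto (fun ε : ℝ =>
              (∑ R : Fin m ≃ Fin m, H k R * x R) + ε * ∑ R : Fin m ≃ Fin m, H k R * y R)
              (nhds 0) (nhds ((∑ R : Fin m ≃ Fin m, H k R * x R)
                + 0 * ∑ R : Fin m ≃ Fin m, H k R * y R)) := by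
            exact (continuous_const.add (continuous_id.mul continuous_const)).tendsto 0
          simpa using h1.mono_left nhdsWithin_le_nhds
        filter_upwards [hε.eventually (signstab _ h0)] with ε hsg
        rw [hlin, hsg, href k htk]
        exact congrFun hx k
    obtain ⟨δ, hδ, hsub⟩ := mem_nhdsGT_iff_exists_Ioo_subset.1 key
    have hδ0 : (0:ℝ) < δ := hδ
    set xs : ℕ → (Fin m ≃ Fin m) → ℝ :=
      fun j R => x R + (δ / ((j:ℝ) + 2)) * y R with hxs
    have hεj : ∀ j : ℕ, δ / ((j:ℝ) + 2) ∈ Set.Ioo (0:ℝ) δ := by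
      intro j
      have h2 : (1:ℝ) < (j:ℝ) + 2 := by have := Nat.cast_nonneg (α:=ℝ) j; linarith
      exact ⟨by positivity, div_lt_self hδ0 h2⟩
    have htend : Tendsto xs atTop (nhds x) := by
      rw [tendsto_pi_nhds]
      intro R
      have h0 : Tendsto (fun j : ℕ => δ / ((j:ℝ) + 2)) atTop (nhds 0) :=
        tendsto_const_nhds.div_atTop
          (tendsto_atTop_add_const_right _ 2 tendsto_natCast_atTop_atTop)
      have := (h0.mul_const (y R)).const_add (x R)
      simpa using this
    have := hcont x a xs htend (fun j => by
      have hj := hsub (hεj j)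
      have : (fun k => SignType.sign (∑ R : Fin m ≃ Fin m, H k R * xs j R)) = t' :=
        funext fun k => hj k
      rw [this]; exact ha)
    rwa [hx] at this
  · intro hmono x a xs hxs hmem
    set t : Fin K → SignType :=
      fun k => SignType.sign (∑ R : Fin m ≃ Fin m, H k R * x R) with ht
    have key : ∀ᶠ j in atTop, ∀ k, t k ≠ 0 →
        SignType.sign (∑ R : Fin m ≃ Fin m, H k R * xs j R) = t k := by
      rw [Filter.eventually_all]
      intro k
      by_cases h0 : t k = 0
      · filter_upwards with j hk; exact absurd h0 hk
      · have hL0 : (∑ R : Fin m ≃ Fin m, H k R * x R) ≠ 0 := by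
          intro h; exact h0 (by simp [ht, h])
        have htd : Tendsto (fun j => ∑ R : Fin m ≃ Fin m, H k R * xs j R)
            atTop (nhds (∑ R : Fin m ≃ Fin m, H k R * x R)) :=
          ((Lcont k).tendsto x).comp hxs
        filter_upwards [htd.eventually (signstab _ hL0)] with j hj _
        exact hj
    obtain ⟨j, hj⟩ := key.exists
    exact hmono t (fun k => SignType.sign (∑ R : Fin m ≃ Fin m, H k R * xs j R))
      ⟨x, rfl⟩ ⟨xs j, rfl⟩ (fun k hk => hj k hk) (hmem j)
end
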